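/- arXiv:1009.1968 — 4 statements merged into one kernel-verified Lean document; each statement's English description precedes it below -/
import Mathlib

section
/- Let β > 0, G > 0, b > 0. The unique minimizer of the Thomas-Fermi functional E^{TF}[ρ] = ∫_{ℝ²} ((-β|x|² + |x|⁴/4)ρ + (bG/2)ρ²) dx over ρ ≥ 0 with ∫ρ = 1 and ∫|x|²ρ < ∞ is ρ(x) = max((μ + β|x|² - |x|⁴/4)/(bG), 0), where μ is the unique constant making ∫ρ = 1. -/
/-!
For `ρ = max ((μ - V) / c) 0` the variational inequality `(V + c ρ - μ) (t - ρ) ≥ 0` holds for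
every `t ≥ 0`; expanding the square, it says pointwise
`V t + c t² / 2 ≥ V ρ + c ρ² / 2 + μ (t - ρ) + c (t - ρ)² / 2`.
Integrating with `t = σ` for a competitor `σ` of the same mass as `ρ` kills the `μ`-term, so
`E[σ] ≥ E[ρ] + (c / 2) ‖σ - ρ‖₂²`: `ρ` is a minimizer and every minimizer equals `ρ` a.e.
The quartic potential is confining, so `ρ` is continuous with compact support, which makes all
the integrals involving `ρ` finite.
-/

open MeasureTheory Filter

noncomputable section

namespace ThomasFermi

variable {α : Type*}

def profile (V : α → ℝ) (c μ : ℝ) (x : α) : ℝ :=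
  max ((μ - V x) / c) 0

def energy [MeasurableSpace α] (ν : Measure α) (V : α → ℝ) (c : ℝ) (σ : α → ℝ) : ℝ :=
  ∫ x, V x * σ x + c / 2 * σ x ^ 2 ∂ν

lemma mul_sub_profile_nonneg {V : α → ℝ} {c : ℝ} (hc : 0 < c) (μ : ℝ) (x : α) {t : ℝ}
    (ht : 0 ≤ t) : 0 ≤ (V x + c * profile V c μ x - μ) * (t - profile V c μ x) := by
  rcases le_or_gt (μ - V x) 0 with hneg | hpos
  · have h0 : profile V c μ x = 0 := max_eq_right (div_nonpos_of_nonpos_of_nonneg hneg hc.le)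
    rw [h0]
    nlinarith
  · have hval : profile V c μ x = (μ - V x) / c := max_eq_left (div_pos hpos hc).le
    simp [hval, mul_div_cancel₀ _ hc.ne']

section Confining

variable [TopologicalSpace α] {V : α → ℝ} {c : ℝ}

lemma continuous_profile (hV : Continuous V) (μ : ℝ) : Continuous (profile V c μ) := by
  unfold profile
  fun_prop

lemma hasCompactSupport_profile [R1Space α] (hV : Tendsto V (cocompact α) atTop) (hc : 0 ≤ c)
    (μ : ℝ) : HasCompactSupport (profile V c μ) := by
  obtain ⟨K, hK, hVK⟩ := mem_cocompact.mp (hV.eventually_ge_atTop μ)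
  refine HasCompactSupport.intro hK fun x hx => ?_
  exact max_eq_right (div_nonpos_of_nonpos_of_nonneg (sub_nonpos.mpr (hVK hx)) hc)

variable [R1Space α] [MeasurableSpace α] [OpensMeasurableSpace α] (ν : Measure α)
  [IsFiniteMeasureOnCompacts ν]

lemma memLp_profile (hVc : Continuous V) (hV : Tendsto V (cocompact α) atTop) (hc : 0 ≤ c)
    (μ : ℝ) (p : ENNReal) : MemLp (profile V c μ) p ν :=
  (continuous_profile hVc μ).memLp_of_hasCompactSupport (hasCompactSupport_profile hV hc μ)

lemma integrable_profile (hVc : Continuous V) (hV : Tendsto V (cocompact α) atTop) (hc : 0 ≤ c)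
    (μ : ℝ) : Integrable (profile V c μ) ν :=
  memLp_one_iff_integrable.mp (memLp_profile ν hVc hV hc μ 1)

lemma integrable_energyDensity_profile (hVc : Continuous V) (hV : Tendsto V (cocompact α) atTop)
    (hc : 0 ≤ c) (μ : ℝ) :
    Integrable (fun x => V x * profile V c μ x + c / 2 * profile V c μ x ^ 2) ν := by
  have hρc := continuous_profile (c := c) hVc μ
  refine (by fun_prop : Continuous _).integrable_of_hasCompactSupport
    ((hasCompactSupport_profile hV hc μ).mono fun x hx h0 => hx ?_)
  simp [h0]

end Confining

variable [MeasurableSpace α] {ν : Measure α} {V : α → ℝ} {c μ : ℝ} {σ : α → ℝ}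

theorem energy_profile_add_le (hc : 0 < c) (hσ : ∀ᵐ x ∂ν, 0 ≤ σ x) (hσ1 : Integrable σ ν)
    (hσ2 : MemLp σ 2 ν) (hρ1 : Integrable (profile V c μ) ν) (hρ2 : MemLp (profile V c μ) 2 ν)
    (hEσ : Integrable (fun x => V x * σ x + c / 2 * σ x ^ 2) ν)
    (hEρ : Integrable (fun x => V x * profile V c μ x + c / 2 * profile V c μ x ^ 2) ν)
    (hmass : ∫ x, σ x ∂ν = ∫ x, profile V c μ x ∂ν) :
    energy ν V c (profile V c μ) + c / 2 * ∫ x, (σ x - profile V c μ x) ^ 2 ∂ν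
      ≤ energy ν V c σ := by
  set ρ := profile V c μ
  have hdiff : Integrable (fun x => (σ x - ρ x) ^ 2) ν := (hσ2.sub hρ2).integrable_sq
  have hlin : Integrable (fun x => μ * (σ x - ρ x)) ν := (hσ1.sub hρ1).const_mul μ
  have hEρlin : Integrable (fun x => V x * ρ x + c / 2 * ρ x ^ 2 + μ * (σ x - ρ x)) ν :=
    hEρ.add hlin
  have hshift : ∫ x, μ * (σ x - ρ x) ∂ν = 0 := by
    rw [integral_const_mul, integral_sub hσ1 hρ1, hmass, sub_self, mul_zero]
  calc energy ν V c ρ + c / 2 * ∫ x, (σ x - ρ x) ^ 2 ∂ν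
      = ∫ x, V x * ρ x + c / 2 * ρ x ^ 2 + μ * (σ x - ρ x) + c / 2 * (σ x - ρ x) ^ 2 ∂ν := by
        rw [integral_add hEρlin (hdiff.const_mul _), integral_add hEρ hlin, hshift,
          integral_const_mul, add_zero, energy]
    _ ≤ energy ν V c σ := by
        refine integral_mono_ae (hEρlin.add (hdiff.const_mul _)) hEσ ?_
        filter_upwards [hσ] with x hx
        have := mul_sub_profile_nonneg (V := V) hc μ x hx
        linear_combination this

lemma ae_eq_of_integral_sq_sub_nonpos {f g : α → ℝ}
    (hint : Integrable (fun x => (f x - g x) ^ 2) ν) (h : ∫ x, (f x - g x) ^ 2 ∂ν ≤ 0) :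
    f =ᵐ[ν] g := by
  have hzero : (fun x => (f x - g x) ^ 2) =ᵐ[ν] 0 :=
    (integral_eq_zero_iff_of_nonneg (fun x => sq_nonneg _) hint).mp
      (le_antisymm h (integral_nonneg fun x => sq_nonneg _))
  filter_upwards [hzero] with x hx
  exact sub_eq_zero.mp (pow_eq_zero_iff two_ne_zero |>.mp hx)

lemma tendsto_quartic_cocompact {E : Type*} [NormedAddCommGroup E] [ProperSpace E] (β : ℝ) :
    Tendsto (fun x : E => -β * ‖x‖ ^ 2 + ‖x‖ ^ 4 / 4) (cocompact E) atTop := by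
  have hsq : Tendsto (fun r : ℝ => r ^ 2) atTop atTop := tendsto_pow_atTop two_ne_zero
  have hpoly : Tendsto (fun r : ℝ => r ^ 2 * (r ^ 2 / 4 - β)) atTop atTop :=
    hsq.atTop_mul_atTop₀ (tendsto_atTop_add_const_right _ _ (hsq.atTop_div_const four_pos))
  refine (hpoly.comp tendsto_norm_cocompact_atTop).congr fun x => ?_
  simp only [Function.comp_apply]
  ring

end ThomasFermi

end

open ThomasFermi

theorem stmt_7_general (β G b μ : ℝ) (hG : 0 < G) (hb : 0 < b)
    (ρ : EuclideanSpace ℝ (Fin 2) → ℝ)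
    (hρ : ∀ x, ρ x = max ((μ + β * ‖x‖ ^ 2 - ‖x‖ ^ 4 / 4) / (b * G)) 0)
    (hmassρ : ∫ x : EuclideanSpace ℝ (Fin 2), ρ x = 1) :
    ∀ σ : EuclideanSpace ℝ (Fin 2) → ℝ,
      (∀ x, 0 ≤ σ x) →
      Integrable σ →
      Integrable (fun x => ‖x‖ ^ 2 * σ x) →
      Integrable (fun x => ‖x‖ ^ 4 * σ x) →
      Integrable (fun x => σ x ^ 2) →
      (∫ x : EuclideanSpace ℝ (Fin 2), σ x = 1) →
      ((∫ x : EuclideanSpace ℝ (Fin 2),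
          ((-β * ‖x‖ ^ 2 + ‖x‖ ^ 4 / 4) * ρ x + (b * G / 2) * ρ x ^ 2))
        ≤ ∫ x : EuclideanSpace ℝ (Fin 2),
            ((-β * ‖x‖ ^ 2 + ‖x‖ ^ 4 / 4) * σ x + (b * G / 2) * σ x ^ 2))
      ∧ ((∫ x : EuclideanSpace ℝ (Fin 2),
            ((-β * ‖x‖ ^ 2 + ‖x‖ ^ 4 / 4) * σ x + (b * G / 2) * σ x ^ 2))
          = (∫ x : EuclideanSpace ℝ (Fin 2),
              ((-β * ‖x‖ ^ 2 + ‖x‖ ^ 4 / 4) * ρ x + (b * G / 2) * ρ x ^ 2))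
        → σ =ᵐ[volume] ρ) := by
  intro σ hσ0 hσ1 hσ2 hσ4 hσsq hmassσ
  set V : EuclideanSpace ℝ (Fin 2) → ℝ := fun x => -β * ‖x‖ ^ 2 + ‖x‖ ^ 4 / 4
  have hc : 0 < b * G := mul_pos hb hG
  obtain rfl : ρ = profile V (b * G) μ := funext fun x => by
    rw [hρ x, profile]
    congr 2; ring
  have hVc : Continuous V := by fun_prop
  have hV := tendsto_quartic_cocompact (E := EuclideanSpace ℝ (Fin 2)) β
  have hEσ : Integrable (fun x => V x * σ x + b * G / 2 * σ x ^ 2) := by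
    refine (((hσ2.const_mul (-β)).add (hσ4.const_mul (1 / 4))).add
      (hσsq.const_mul (b * G / 2))).congr (ae_of_all _ fun x => ?_)
    simp only [Pi.add_apply, V]
    ring
  have hσL2 : MemLp σ 2 := (memLp_two_iff_integrable_sq hσ1.1).mpr hσsq
  have hρL2 := memLp_profile volume hVc hV hc.le μ 2
  have hgap := energy_profile_add_le hc (ae_of_all _ hσ0) hσ1 hσL2
    (integrable_profile volume hVc hV hc.le μ) hρL2 hEσ
    (integrable_energyDensity_profile volume hVc hV hc.le μ) (hmassσ.trans hmassρ.symm)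
  have hsq_nonneg : 0 ≤ ∫ x, (σ x - profile V (b * G) μ x) ^ 2 :=
    integral_nonneg fun x => sq_nonneg _
  simp only [energy, V] at hgap
  refine ⟨by nlinarith, fun heq => ae_eq_of_integral_sq_sub_nonpos
    (hσL2.sub hρL2).integrable_sq (nonpos_of_mul_nonpos_right ?_ (half_pos hc))⟩
  linarith

/-- The explicit Thomas-Fermi profile is the unique minimizer of the Thomas-Fermi
functional among nonnegative densities of unit mass with finite second moment. -/
theorem stmt_7 (β G b μ : ℝ) (hβ : 0 < β) (hG : 0 < G) (hb : 0 < b)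
    (ρ : EuclideanSpace ℝ (Fin 2) → ℝ)
    (hρ : ∀ x, ρ x = max ((μ + β * ‖x‖ ^ 2 - ‖x‖ ^ 4 / 4) / (b * G)) 0)
    (hmassρ : ∫ x : EuclideanSpace ℝ (Fin 2), ρ x = 1) :
    ∀ σ : EuclideanSpace ℝ (Fin 2) → ℝ,
      (∀ x, 0 ≤ σ x) →
      Integrable σ →
      Integrable (fun x => ‖x‖ ^ 2 * σ x) →
      Integrable (fun x => ‖x‖ ^ 4 * σ x) →
      Integrable (fun x => σ x ^ 2) →
      (∫ x : EuclideanSpace ℝ (Fin 2), σ x = 1) →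
      ((∫ x : EuclideanSpace ℝ (Fin 2),
          ((-β * ‖x‖ ^ 2 + ‖x‖ ^ 4 / 4) * ρ x + (b * G / 2) * ρ x ^ 2))
        ≤ ∫ x : EuclideanSpace ℝ (Fin 2),
            ((-β * ‖x‖ ^ 2 + ‖x‖ ^ 4 / 4) * σ x + (b * G / 2) * σ x ^ 2))
      ∧ ((∫ x : EuclideanSpace ℝ (Fin 2),
            ((-β * ‖x‖ ^ 2 + ‖x‖ ^ 4 / 4) * σ x + (b * G / 2) * σ x ^ 2))
          = (∫ x : EuclideanSpace ℝ (Fin 2),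
              ((-β * ‖x‖ ^ 2 + ‖x‖ ^ 4 / 4) * ρ x + (b * G / 2) * ρ x ^ 2))
        → σ =ᵐ[volume] ρ) :=
  stmt_7_general β G b μ hG hb ρ hρ hmassρ
end

section
/- Let β, G, b > 0 with β ≥ (3bG)^{1/3}(8π)^{-1/3}, and let ρ be the Thomas-Fermi density ρ(x) = (1/(bG)) max(μ + β|x|² - |x|⁴/4, 0) with μ = (3bG/(8π))^{2/3} - β² (so that ∫ρ = 1). Then the Thomas-Fermi energy satisfies E^{TF} = ∫_{ℝ²} ((-β|x|² + |x|⁴/4)ρ + (bG/2)ρ²) dx = (3/5)(3bG/(8π))^{2/3} - β². -/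
/-!
With `k = (3bG/(8π))^(1/3)` one has `μ + βs - s²/4 = k² - (s/2 - β)²`, and the
hypothesis on `β` says exactly `k ≤ β`, so the density lives on the annulus
`2(β - k) ≤ |x|² ≤ 2(β + k)`.
Because the potential `-β|x|² + |x|⁴/4` is `μ` minus that polynomial `P`, the energy density
is `(μ P⁺ - (P⁺)²/2) / (bG)`. Polar coordinates and `s = |x|²` turn the energy into
`π ∫_0^∞ … ds`, and `u = s/2 - β` into
`2π ∫_{-k}^{k} (μ(k² - u²) - (k² - u²)²/2) du / (bG)`, an elementary polynomial integral;
`bG = 8πk³/3` then gives `μ - 2k²/5 = 3k²/5 - β²`.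
-/

open MeasureTheory Real Set

theorem integral_fun_norm_sq_euclideanSpace_fin_two {F : Type*} [NormedAddCommGroup F]
    [NormedSpace ℝ F] (g : ℝ → F) :
    ∫ x : EuclideanSpace ℝ (Fin 2), g (‖x‖ ^ 2) = π • ∫ s in Ioi 0, g s := by
  have hball : volume.real (Metric.ball (0 : EuclideanSpace ℝ (Fin 2)) 1) = π := by
    simp [measureReal_def, pi_pos.le]
  rw [integral_fun_norm_addHaar volume (fun r => g (r ^ 2)), hball, finrank_euclideanSpace_fin,
    ← integral_comp_rpow_Ioi g two_ne_zero, smul_comm, ← Nat.cast_smul_eq_nsmul ℝ,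
    ← integral_smul]
  congr 1
  refine setIntegral_congr_fun measurableSet_Ioi fun r _ => ?_
  norm_num [smul_smul]

theorem integral_Ioi_comp_max_sub_sq_zero {E : Type*} [NormedAddCommGroup E]
    [NormedSpace ℝ E] (φ : ℝ → E) (hφ : φ 0 = 0) {a β k : ℝ} (ha : 0 < a) (hk : 0 ≤ k)
    (hkβ : k ≤ β) :
    ∫ s in Ioi 0, φ (max (k ^ 2 - (s / a - β) ^ 2) 0) =
      a • ∫ u in -k..k, φ (k ^ 2 - u ^ 2) := by
  have hlo : 0 ≤ a * (β - k) := by nlinarith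
  have hle : a * (β - k) ≤ a * (β + k) := by nlinarith
  have houtside : ∀ s ∈ Ioi 0 \ Ioc (a * (β - k)) (a * (β + k)),
      φ (max (k ^ 2 - (s / a - β) ^ 2) 0) = 0 := by
    rintro s ⟨-, hs⟩
    rw [mem_Ioc, not_and_or, not_lt, not_le, ← div_le_iff₀' ha, ← lt_div_iff₀' ha] at hs
    have hnonpos : k ^ 2 - (s / a - β) ^ 2 ≤ 0 := by
      rcases hs with hs | hs
      · nlinarith [mul_nonneg (by linarith : 0 ≤ k - (s / a - β))
          (by linarith : 0 ≤ β - k - s / a)]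
      · nlinarith [mul_nonneg (by linarith : 0 ≤ s / a - β + k)
          (by linarith : 0 ≤ s / a - β - k)]
    rw [max_eq_right hnonpos, hφ]
  have hinside : EqOn (fun s => φ (max (k ^ 2 - (s / a - β) ^ 2) 0))
      (fun s => φ (k ^ 2 - (s / a - β) ^ 2)) (uIcc (a * (β - k)) (a * (β + k))) := by
    intro s hs
    rw [uIcc_of_le hle, mem_Icc, ← div_le_iff₀' ha, ← le_div_iff₀' ha] at hs
    have hnonneg : 0 ≤ k ^ 2 - (s / a - β) ^ 2 := by
      nlinarith [mul_nonneg (by linarith : 0 ≤ k - (s / a - β))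
        (by linarith : 0 ≤ k + (s / a - β))]
    simp only [max_eq_left hnonneg]
  rw [setIntegral_eq_of_subset_of_forall_sdiff_eq_zero measurableSet_Ioi
      (Ioc_subset_Ioi_self.trans (Ioi_subset_Ioi hlo)) houtside,
    ← intervalIntegral.integral_of_le hle, intervalIntegral.integral_congr hinside,
    intervalIntegral.integral_comp_div_sub (fun u => φ (k ^ 2 - u ^ 2)) ha.ne']
  congr 2 <;> field_simp <;> ring

theorem integral_mul_sub_sq_div_two_comp_sq_sub_sq (μ k : ℝ) :
    ∫ u in -k..k, (μ * (k ^ 2 - u ^ 2) - (k ^ 2 - u ^ 2) ^ 2 / 2)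
      = 4 / 3 * μ * k ^ 3 - 8 / 15 * k ^ 5 := by
  have hexpand : ∀ u : ℝ, μ * (k ^ 2 - u ^ 2) - (k ^ 2 - u ^ 2) ^ 2 / 2
      = (μ * k ^ 2 - k ^ 4 / 2) + (k ^ 2 - μ) * u ^ 2 - u ^ 4 / 2 := fun u => by ring
  simp_rw [hexpand]
  rw [intervalIntegral.integral_sub, intervalIntegral.integral_add,
    intervalIntegral.integral_const_mul, intervalIntegral.integral_div, integral_pow,
    integral_pow]
  · simp only [intervalIntegral.integral_const, smul_eq_mul]
    ring
  all_goals exact Continuous.intervalIntegrable (by fun_prop) _ _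

theorem sub_mul_max_zero_add_sq (m p a : ℝ) (ha : a ≠ 0) :
    (m - p) * (1 / a * max p 0) + a / 2 * (1 / a * max p 0) ^ 2
      = 1 / a * (m * max p 0 - max p 0 ^ 2 / 2) := by
  rcases le_total p 0 with hp | hp
  · simp [max_eq_right hp]
  · rw [max_eq_left hp]
    field_simp
    ring

theorem stmt_9_general (β G b : ℝ) (hG : 0 < G) (hb : 0 < b)
    (hcrit : β ≥ (3 * b * G) ^ ((1 : ℝ) / 3) * (8 * Real.pi) ^ (-(1 : ℝ) / 3))
    (μ : ℝ) (hμ : μ = (3 * b * G / (8 * Real.pi)) ^ ((2 : ℝ) / 3) - β ^ 2)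
    (ρ : EuclideanSpace ℝ (Fin 2) → ℝ)
    (hρ : ∀ x, ρ x = (1 / (b * G)) * max (μ + β * ‖x‖ ^ 2 - ‖x‖ ^ 4 / 4) 0) :
    ∫ x : EuclideanSpace ℝ (Fin 2),
        ((-β * ‖x‖ ^ 2 + ‖x‖ ^ 4 / 4) * ρ x + (b * G / 2) * ρ x ^ 2)
      = (3 / 5) * (3 * b * G / (8 * Real.pi)) ^ ((2 : ℝ) / 3) - β ^ 2 := by
  set c := 3 * b * G / (8 * π) with hc
  have hc0 : 0 < c := by positivity
  set k := c ^ ((1 : ℝ) / 3) with hk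
  have hk0 : 0 < k := rpow_pos_of_pos hc0 _
  have hk3 : k ^ 3 = c := by rw [hk, ← rpow_natCast, ← rpow_mul hc0.le]; norm_num
  have hk2 : c ^ ((2 : ℝ) / 3) = k ^ 2 := by
    rw [hk, ← rpow_natCast, ← rpow_mul hc0.le]; norm_num
  have hkβ : k ≤ β := by
    rwa [neg_div, rpow_neg (by positivity), ← div_eq_mul_inv, ← div_rpow (by positivity)
      (by positivity)] at hcrit
  have hbG : b * G = 8 * π * k ^ 3 / 3 := by rw [hk3, hc]; field_simp
  have hP : ∀ r : ℝ, μ + β * r ^ 2 - r ^ 4 / 4 = k ^ 2 - (r ^ 2 / 2 - β) ^ 2 := fun r => by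
    rw [hμ, hk2]; ring
  let φ : ℝ → ℝ := fun t => 1 / (b * G) * (μ * t - t ^ 2 / 2)
  calc _ = ∫ x : EuclideanSpace ℝ (Fin 2), φ (max (k ^ 2 - (‖x‖ ^ 2 / 2 - β) ^ 2) 0) := by
        congr 1 with x
        rw [hρ, ← hP,
          show -β * ‖x‖ ^ 2 + ‖x‖ ^ 4 / 4 = μ - (μ + β * ‖x‖ ^ 2 - ‖x‖ ^ 4 / 4) by ring,
          sub_mul_max_zero_add_sq _ _ _ (by positivity)]
    _ = π * (2 * ∫ u in -k..k, φ (k ^ 2 - u ^ 2)) := by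
        rw [integral_fun_norm_sq_euclideanSpace_fin_two
            (fun s => φ (max (k ^ 2 - (s / 2 - β) ^ 2) 0)),
          integral_Ioi_comp_max_sub_sq_zero φ (by simp [φ]) two_pos hk0.le hkβ]
        rfl
    _ = _ := by
        rw [intervalIntegral.integral_const_mul, integral_mul_sub_sq_div_two_comp_sq_sub_sq,
          hbG, hμ, hk2]
        field_simp
        ring

theorem stmt_9 (β G b : ℝ) (hβ : 0 < β) (hG : 0 < G) (hb : 0 < b)
    (hcrit : β ≥ (3 * b * G) ^ ((1 : ℝ) / 3) * (8 * Real.pi) ^ (-(1 : ℝ) / 3))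
    (μ : ℝ) (hμ : μ = (3 * b * G / (8 * Real.pi)) ^ ((2 : ℝ) / 3) - β ^ 2)
    (ρ : EuclideanSpace ℝ (Fin 2) → ℝ)
    (hρ : ∀ x, ρ x = (1 / (b * G)) * max (μ + β * ‖x‖ ^ 2 - ‖x‖ ^ 4 / 4) 0) :
    ∫ x : EuclideanSpace ℝ (Fin 2),
        ((-β * ‖x‖ ^ 2 + ‖x‖ ^ 4 / 4) * ρ x + (b * G / 2) * ρ x ^ 2)
      = (3 / 5) * (3 * b * G / (8 * Real.pi)) ^ ((2 : ℝ) / 3) - β ^ 2 :=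
  stmt_9_general β G b hG hb hcrit μ hμ ρ hρ
end

section
/- For every real β, G > 0, b ≥ 1 and C > 0, there exists ε₀ > 0 such that for all 0 < ε < ε₀ the inequality (6/5)(3bG/(8π))^{2/3} - β² - βε/2 - 7ε²/16 ≥ -β n ε + (G e^{-1/12})/(2π ε √n) + n²ε²/4 + 3nε²/4 fails for every positive integer n. Equivalently, for ε small enough there is no positive integer n satisfying this inequality. -/
/-!
Completing squares, the left-hand side is at most `A = (6/5)(3bG/(8π))^(2/3)` and the
right-hand side is at least `-2β² + a/(ε√n) + n²ε²/8` with `a = G e^(-1/12)/(2π)`.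
With `t = nε`: if `t` is large, `t²/8` alone exceeds `A + 2β²`; if `t` is bounded, then
`ε√n = √(εt) → 0` as `ε → 0`, so `a/(ε√n)` exceeds it.
-/

open Real

lemma exists_pos_forall_lt_div_mul_sqrt_add_sq {a : ℝ} (ha : 0 < a) (D : ℝ) :
    ∃ ε₀ > 0, ∀ ε, 0 < ε → ε < ε₀ → ∀ x : ℝ, 0 < x →
      D < a / (ε * √x) + x ^ 2 * ε ^ 2 / 8 := by
  set D' := |D| + 1
  have hD' : D < D' := by linarith [le_abs_self D]
  have hD'1 : 1 ≤ D' := by linarith [abs_nonneg D]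
  refine ⟨a ^ 2 / (D' ^ 2 * (8 * D')), by positivity, fun ε hε hε₀ x hx => ?_⟩
  have hfrac : 0 < a / (ε * √x) := by positivity
  rcases le_or_gt (8 * D') (x * ε) with hlarge | hsmall
  · nlinarith
  · have hsq : (ε * √x) ^ 2 < (a / D') ^ 2 := calc
      (ε * √x) ^ 2 = ε * (x * ε) := by rw [mul_pow, sq_sqrt hx.le]; ring
      _ < a ^ 2 / (D' ^ 2 * (8 * D')) * (8 * D') := by gcongr
      _ = (a / D') ^ 2 := by field_simp
    have hlt : ε * √x < a / D' := lt_of_pow_lt_pow_left₀ 2 (by positivity) hsq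
    have : D' < a / (ε * √x) := by
      rw [lt_div_iff₀ (by positivity)]
      rwa [lt_div_iff₀ (by positivity), mul_comm] at hlt
    nlinarith

theorem stmt_13_general (β G b : ℝ) (hG : 0 < G) :
    ∃ ε₀ : ℝ, 0 < ε₀ ∧ ∀ ε : ℝ, 0 < ε → ε < ε₀ → ∀ n : ℕ, 0 < n →
      ¬((6 / 5) * (3 * b * G / (8 * Real.pi)) ^ ((2 : ℝ) / 3) - β ^ 2 - β * ε / 2
          - 7 * ε ^ 2 / 16
        ≥ -β * n * ε + (G * Real.exp (-1 / 12)) / (2 * Real.pi * ε * Real.sqrt n)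
          + n ^ 2 * ε ^ 2 / 4 + 3 * n * ε ^ 2 / 4) := by
  set A := (6 / 5) * (3 * b * G / (8 * π)) ^ ((2 : ℝ) / 3)
  set a := G * exp (-1 / 12) / (2 * π)
  obtain ⟨ε₀, hε₀, hsmall⟩ :=
    exists_pos_forall_lt_div_mul_sqrt_add_sq (a := a) (by positivity) (A + 2 * β ^ 2)
  refine ⟨ε₀, hε₀, fun ε hε hεε₀ n hn => not_le.mpr ?_⟩
  have hn : (0 : ℝ) < n := Nat.cast_pos.mpr hn
  have hlhs : A - β ^ 2 - β * ε / 2 - 7 * ε ^ 2 / 16 ≤ A := by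
    nlinarith [sq_nonneg (β + ε / 4)]
  have hquad : -2 * β ^ 2 ≤ -β * n * ε + n ^ 2 * ε ^ 2 / 8 := by
    nlinarith [sq_nonneg (n * ε - 4 * β)]
  have hsplit : G * exp (-1 / 12) / (2 * π * ε * √n) = a / (ε * √n) := by
    rw [mul_assoc, ← div_div]
  have hlarge := hsmall ε hε hεε₀ n hn
  have hlin : 0 ≤ 3 * n * ε ^ 2 / 4 := by positivity
  rw [hsplit]
  linarith

theorem stmt_13 (β G b C : ℝ) (hG : 0 < G) (hb : 1 ≤ b) (hC : 0 < C) :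
    ∃ ε₀ : ℝ, 0 < ε₀ ∧ ∀ ε : ℝ, 0 < ε → ε < ε₀ → ∀ n : ℕ, 0 < n →
      ¬((6 / 5) * (3 * b * G / (8 * Real.pi)) ^ ((2 : ℝ) / 3) - β ^ 2 - β * ε / 2
          - 7 * ε ^ 2 / 16
        ≥ -β * n * ε + (G * Real.exp (-1 / 12)) / (2 * Real.pi * ε * Real.sqrt n)
          + n ^ 2 * ε ^ 2 / 4 + 3 * n * ε ^ 2 / 4) :=
  stmt_13_general β G b hG
end

section
/- Let ε > 0 and suppose f ∈ F_ε (entire with ∫|f|² e^{-|z|²/ε} < ∞) is a polynomial satisfying the equation -β M_ε f + (1/4)(M_ε² f + ε M_ε f) + (G/2) f̄(ε∂_z)[f²(z/2)] = μ f for some real μ, where M_ε f = ε∂_z(zf), f̄(ε∂_z)[g] = Σ_k conj(a_k)(ε∂_z)^k g for f = Σ_k a_k z^k, and f²(z/2) denotes the function z ↦ f(z/2)². If G > 0, then f is a monomial: f(z) = a_n z^n for some n. -/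
/-!
Let `m ≤ n` be the trailing degree and the degree of `f`. The linear part of the equation
preserves degrees, so its coefficient of `z ^ j` vanishes for every `j > n`. In the nonlinear
term, `(ε∂_z)^k` lowers the degree `2n` of `f(z/2)²` by exactly `k`, so the coefficient of
`z ^ (2n - m)` receives a contribution from `k = m` only, and it is nonzero. Hence `2n - m ≤ n`,
i.e. `m = n`, and `f` is a monomial.
-/

open Polynomial

namespace Polynomial

theorem eq_C_mul_X_pow_of_natDegree_le_natTrailingDegree {R : Type*} [Semiring R] {p : R[X]}
    (h : p.natDegree ≤ p.natTrailingDegree) : p = C p.leadingCoeff * X ^ p.natDegree := by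
  ext i
  rw [coeff_C_mul_X_pow]
  obtain hi | rfl | hi := lt_trichotomy i p.natDegree
  · rw [if_neg hi.ne, coeff_eq_zero_of_lt_natTrailingDegree (hi.trans_le h)]
  · rw [if_pos rfl, coeff_natDegree]
  · rw [if_neg hi.ne', coeff_eq_zero_of_natDegree_lt hi]

section CommSemiring

variable {R : Type*} [CommSemiring R]

theorem coeff_derivative_X_mul (p : R[X]) (i : ℕ) :
    (derivative (X * p)).coeff i = (i + 1) * p.coeff i := by
  rw [coeff_derivative, coeff_X_mul, mul_comm]

theorem iterate_C_mul_derivative (a : R) (k : ℕ) (p : R[X]) :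
    (fun g => C a * derivative g)^[k] p = C (a ^ k) * derivative^[k] p := by
  induction k with
  | zero => simp
  | succ k ih =>
    rw [Function.iterate_succ_apply', ih, derivative_C_mul, Function.iterate_succ_apply',
      ← mul_assoc, ← C_mul, pow_succ']

theorem coeff_iterate_C_mul_derivative (a : R) (k : ℕ) (p : R[X]) (j : ℕ) :
    ((fun g => C a * derivative g)^[k] p).coeff j
      = a ^ k * (j + k).descFactorial k * p.coeff (j + k) := by
  rw [iterate_C_mul_derivative, coeff_C_mul, coeff_iterate_derivative, nsmul_eq_mul, mul_assoc]

end CommSemiring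

theorem natDegree_comp_C_mul_X {K : Type*} [Field K] {a : K} (ha : a ≠ 0) (p : K[X]) :
    (p.comp (C a * X)).natDegree = p.natDegree := by
  rw [natDegree_comp, natDegree_C_mul_X a ha, mul_one]

end Polynomial

/-- The operator `f̄(ε∂_z)`: the power series of `f` with conjugated coefficients, evaluated
at `ε∂_z`. -/
noncomputable def conjCoeffDiffOp (ε : ℂ) (f g : ℂ[X]) : ℂ[X] :=
  ∑ k ∈ f.support, C (starRingEnd ℂ (f.coeff k)) * (fun g => C ε * derivative g)^[k] g

theorem coeff_conjCoeffDiffOp_natDegree_sub_natTrailingDegree (ε : ℂ) (f g : ℂ[X])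
    (hfg : f.natTrailingDegree ≤ g.natDegree) :
    (conjCoeffDiffOp ε f g).coeff (g.natDegree - f.natTrailingDegree)
      = starRingEnd ℂ f.trailingCoeff * (ε ^ f.natTrailingDegree
          * (g.natDegree.descFactorial f.natTrailingDegree) * g.leadingCoeff) := by
  set m := f.natTrailingDegree
  rw [conjCoeffDiffOp, finsetSum_coeff, Finset.sum_eq_single m]
  · rw [coeff_C_mul, coeff_iterate_C_mul_derivative, Nat.sub_add_cancel hfg, leadingCoeff,
      trailingCoeff]
  · intro k hk hkm
    have hmk : m < k := (natTrailingDegree_le_of_mem_supp k hk).lt_of_ne' hkm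
    rw [coeff_C_mul, coeff_iterate_C_mul_derivative,
      coeff_eq_zero_of_natDegree_lt (p := g) (by omega), mul_zero, mul_zero]
  · intro hm
    rw [coeff_C_mul, notMem_support_iff.mp hm, map_zero, zero_mul]

theorem coeff_conjCoeffDiffOp_natDegree_sub_natTrailingDegree_ne_zero {ε : ℂ} (hε : ε ≠ 0)
    {f g : ℂ[X]} (hf : f ≠ 0) (hg : g ≠ 0) (hfg : f.natTrailingDegree ≤ g.natDegree) :
    (conjCoeffDiffOp ε f g).coeff (g.natDegree - f.natTrailingDegree) ≠ 0 := by
  rw [coeff_conjCoeffDiffOp_natDegree_sub_natTrailingDegree ε f g hfg]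
  have hdesc : (g.natDegree.descFactorial f.natTrailingDegree : ℂ) ≠ 0 :=
    Nat.cast_ne_zero.mpr (Nat.descFactorial_eq_zero_iff_lt.not.mpr hfg.not_gt)
  refine mul_ne_zero ?_ (mul_ne_zero (mul_ne_zero (pow_ne_zero _ hε) hdesc) ?_)
  · exact (_root_.map_ne_zero _).mpr (trailingCoeff_nonzero_iff_nonzero.mpr hf)
  · exact leadingCoeff_ne_zero.mpr hg

/-- A polynomial solution of the monomial-form Euler-Lagrange equation
`-β M_ε f + (1/4)(M_ε² f + ε M_ε f) + (G/2) f̄(ε∂_z)[f²(z/2)] = μ f`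
must be a monomial. Here `M_ε f = ε ∂_z (z f)` and
`f̄(ε∂_z)[g] = Σ_k conj(a_k) (ε ∂_z)^k g` for `f = Σ_k a_k z^k`. -/
theorem stmt_16 (ε β G μ : ℝ) (hε : 0 < ε) (hG : 0 < G) (f : Polynomial ℂ)
    (Mf : Polynomial ℂ → Polynomial ℂ)
    (hMf : ∀ g : Polynomial ℂ, Mf g = Polynomial.C (ε : ℂ) * Polynomial.derivative (Polynomial.X * g))
    (N : Polynomial ℂ)
    (hN : N = ∑ k ∈ f.support, Polynomial.C ((starRingEnd ℂ) (f.coeff k)) *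
        ((fun g => Polynomial.C (ε : ℂ) * Polynomial.derivative g)^[k]
          ((f.comp (Polynomial.C (1 / 2 : ℂ) * Polynomial.X)) ^ 2)))
    (heq : Polynomial.C (-(β : ℂ)) * Mf f
        + Polynomial.C (1 / 4 : ℂ) * (Mf (Mf f) + Polynomial.C (ε : ℂ) * Mf f)
        + Polynomial.C ((G : ℂ) / 2) * N
      = Polynomial.C (μ : ℂ) * f) :
    ∃ (n : ℕ) (a : ℂ), f = Polynomial.C a * Polynomial.X ^ n := by
  by_cases hf : f = 0
  · exact ⟨0, 0, by simp [hf]⟩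
  refine ⟨_, _, eq_C_mul_X_pow_of_natDegree_le_natTrailingDegree ?_⟩
  set q := (f.comp (C (1 / 2 : ℂ) * X)) ^ 2
  have hq : q ≠ 0 := pow_ne_zero _ ((comp_C_mul_X_eq_zero_iff (by simp)).not.mpr hf)
  have hqdeg : q.natDegree = 2 * f.natDegree := by
    rw [natDegree_pow, natDegree_comp_C_mul_X (by norm_num)]
  set j := q.natDegree - f.natTrailingDegree
  have hmq : f.natTrailingDegree ≤ q.natDegree := by
    have := f.natTrailingDegree_le_natDegree; omega
  have hNj : N.coeff j ≠ 0 := hN ▸ coeff_conjCoeffDiffOp_natDegree_sub_natTrailingDegree_ne_zero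
    (by exact_mod_cast hε.ne') hf hq hmq
  by_contra! hlt
  have hfj : f.coeff j = 0 := coeff_eq_zero_of_natDegree_lt (by omega)
  have hcoeff := congrArg (coeff · j) heq
  simp only [hMf, coeff_add, coeff_C_mul, coeff_derivative_X_mul, hfj, mul_zero,
    zero_add] at hcoeff
  have hG2 : (G : ℂ) / 2 ≠ 0 := div_ne_zero (Complex.ofReal_ne_zero.mpr hG.ne') two_ne_zero
  exact hNj ((mul_eq_zero.mp hcoeff).resolve_left hG2)
end
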